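/- Let 1 ≤ p < ∞ and let (X,d,μ) satisfy the standing assumptions and be of uniformly locally p-controlled geometry. Then X is uniformly locally quasiconvex: there exist R ∈ (0,∞] and C ≥ 1 such that for all x, y ∈ X with d(x,y) ≤ R there exists a (C·d(x,y))-Lipschitz map γ : [0,1] → X with γ(0) = x and γ(1) = y. -/

import Mathlib

/-!
For `ε > 0` let `chainDist ε x y` be the infimum of the lengths of `ε`-chains from `x` to `y`.
As a function of `y` it is continuous and has upper gradient `1`, so the Poincaré inequality
bounds its mean oscillation on balls of radius `r` by `C r`. Telescoping over dyadic balls and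
doubling turn this into `chainDist ε x y ≤ K d(x,y)`, `K = 8 C_d² C`, at small scales,
uniformly in `ε`. Run at constant speed, such chains are coarsely Lipschitz paths from `x` to `y`
with defect `ε`; in a proper space Tychonoff compactness gives a cluster point as `ε → 0`,
a `K d(x,y)`-Lipschitz path.
-/

open MeasureTheory Metric Set Filter
open scoped ENNReal NNReal Topology

/-- `g` is an upper gradient of `u`: for every `L ≥ 0` and every `1`-Lipschitz curve
`γ : [0,L] → X`, one has `|u(γ L) - u(γ 0)| ≤ ∫₀^L g(γ t) dt`. -/
def IsUpperGradient {X : Type*} [MetricSpace X] (g : X → ℝ≥0∞) (u : X → ℝ) : Prop :=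
  ∀ (L : ℝ) (γ : ℝ → X), 0 ≤ L → LipschitzOnWith 1 γ (Set.Icc 0 L) →
    ENNReal.ofReal |u (γ L) - u (γ 0)| ≤ ∫⁻ t in Set.Icc 0 L, g (γ t)

/-- `(X,d,μ)` is of uniformly locally `p`-controlled geometry: there are `R₀ ∈ (0,∞]`,
`C_d ≥ 1`, `C, λ > 0` such that the measure is doubling and a `p`-Poincaré inequality holds
at all scales `0 < r < R₀`. -/
def UniformlyLocallyControlledGeometry {X : Type*} [MetricSpace X] [MeasurableSpace X]
    (p : ℝ) (μ : Measure X) : Prop :=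
  ∃ (R₀ : ℝ≥0∞) (Cd C lam : ℝ), 0 < R₀ ∧ 1 ≤ Cd ∧ 0 < C ∧ 0 < lam ∧
    (∀ (x : X) (r : ℝ), 0 < r → ENNReal.ofReal r < R₀ →
      μ (ball x (2 * r)) ≤ ENNReal.ofReal Cd * μ (ball x r)) ∧
    (∀ (u : X → ℝ) (g : X → ℝ≥0∞), LocallyIntegrable u μ → Measurable g →
      IsUpperGradient g u → ∀ (x : X) (r : ℝ), 0 < r → ENNReal.ofReal r < R₀ →
      ENNReal.ofReal (⨍ y in ball x r, |u y - ⨍ z in ball x r, u z ∂μ| ∂μ) ≤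
        ENNReal.ofReal (C * r) *
          ((∫⁻ y in ball x (lam * r), g y ^ p ∂μ) / μ (ball x (lam * r))) ^ (1 / p))

open scoped unitInterval

section Chain

variable {X : Type*} [MetricSpace X] {ε s t : ℝ} {x y z : X}

def chainLengths (ε : ℝ) (x y : X) : Set ℝ :=
  {s | ∃ (n : ℕ) (f : ℕ → X), f 0 = x ∧ f n = y ∧ (∀ i < n, dist (f i) (f (i + 1)) ≤ ε) ∧
    ∑ i ∈ Finset.range n, dist (f i) (f (i + 1)) = s}

/-- The `ε`-chain distance. Where no `ε`-chain exists it takes the junk value `sInf ∅ = 0`;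
this cannot happen in a connected space. -/
noncomputable def chainDist (ε : ℝ) (x y : X) : ℝ :=
  sInf (chainLengths ε x y)

theorem dist_le_of_mem_chainLengths (hs : s ∈ chainLengths ε x y) : dist x y ≤ s := by
  obtain ⟨n, f, rfl, rfl, -, rfl⟩ := hs
  exact dist_le_range_sum_dist f n

theorem zero_mem_chainLengths (ε : ℝ) (x : X) : (0 : ℝ) ∈ chainLengths ε x x :=
  ⟨0, fun _ => x, rfl, rfl, by simp, by simp⟩

theorem dist_mem_chainLengths (h : dist x y ≤ ε) : dist x y ∈ chainLengths ε x y :=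
  ⟨1, fun i => if i = 0 then x else y, by simp, by simp, by simpa using h, by simp⟩

theorem add_mem_chainLengths (hs : s ∈ chainLengths ε x y) (ht : t ∈ chainLengths ε y z) :
    s + t ∈ chainLengths ε x z := by
  obtain ⟨n, f, rfl, rfl, hf, rfl⟩ := hs
  obtain ⟨m, g, hg0, rfl, hg, rfl⟩ := ht
  set h : ℕ → X := fun i => if i ≤ n then f i else g (i - n)
  have h_le : ∀ i ≤ n, h i = f i := fun i hi => if_pos hi
  have h_ge : ∀ i, n ≤ i → h i = g (i - n) := by
    intro i hi
    rcases hi.eq_or_lt with rfl | hi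
    · simp [h, hg0]
    · exact if_neg (not_le.2 hi)
  refine ⟨n + m, h, h_le 0 (Nat.zero_le n), by rw [h_ge _ (by omega), Nat.add_sub_cancel_left],
    fun i hi => ?_, ?_⟩
  · rcases lt_or_ge i n with hin | hin
    · rw [h_le i hin.le, h_le (i + 1) hin]
      exact hf i hin
    · rw [h_ge i hin, h_ge (i + 1) (by omega), Nat.sub_add_comm hin]
      exact hg _ (by omega)
  · rw [Finset.sum_range_add]
    congr 1
    · refine Finset.sum_congr rfl fun i hi => ?_
      rw [h_le i (Finset.mem_range.1 hi).le, h_le (i + 1) (Finset.mem_range.1 hi)]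
    · refine Finset.sum_congr rfl fun i _ => ?_
      rw [h_ge _ (by omega), h_ge _ (by omega)]
      congr 2 <;> omega

theorem chainLengths_nonempty [ConnectedSpace X] (hε : 0 < ε) (x y : X) :
    (chainLengths ε x y).Nonempty := by
  refine PreconnectedSpace.induction₂' (fun x y => (chainLengths ε x y).Nonempty)
    (fun x => ?_) ⟨fun _ _ _ ⟨s, hs⟩ ⟨t, ht⟩ => ⟨s + t, add_mem_chainLengths hs ht⟩⟩ x y
  filter_upwards [ball_mem_nhds x hε] with y hy
  exact ⟨⟨_, dist_mem_chainLengths (mem_ball'.1 hy).le⟩,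
    ⟨_, dist_mem_chainLengths (mem_ball.1 hy).le⟩⟩

theorem chainDist_le (hs : s ∈ chainLengths ε x y) : chainDist ε x y ≤ s :=
  csInf_le ⟨0, fun _ ht => dist_nonneg.trans (dist_le_of_mem_chainLengths ht)⟩ hs

theorem chainDist_le_dist (h : dist x y ≤ ε) : chainDist ε x y ≤ dist x y :=
  chainDist_le (dist_mem_chainLengths h)

theorem chainDist_le_of_lipschitzOnWith (hε : 0 < ε) {L : ℝ} (hL : 0 ≤ L) {γ : ℝ → X}
    (hγ : LipschitzOnWith 1 γ (Icc 0 L)) : chainDist ε (γ 0) (γ L) ≤ L := by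
  obtain ⟨n, hn⟩ := exists_nat_gt (L / ε)
  have hn_pos : (0 : ℝ) < n := (div_nonneg hL hε.le).trans_lt hn
  set τ := L / n
  have hτε : τ ≤ ε := by
    rw [div_lt_iff₀ hε] at hn
    exact (div_le_iff₀ hn_pos).2 (by linarith)
  have hmem : ∀ i ≤ n, (i : ℝ) * τ ∈ Icc 0 L := fun i hi =>
    ⟨by positivity, by
      calc (i : ℝ) * τ ≤ n * τ := by gcongr
        _ = L := mul_div_cancel₀ L hn_pos.ne'⟩
  have hstep : ∀ i < n, dist (γ (i * τ)) (γ ((i + 1 : ℕ) * τ)) ≤ τ := fun i hi => by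
    have := hγ.dist_le_mul _ (hmem i hi.le) _ (hmem (i + 1) hi)
    rw [Nat.cast_succ, add_mul, one_mul] at this ⊢
    rwa [NNReal.coe_one, one_mul, Real.dist_eq, sub_add_cancel_left, abs_neg,
      abs_of_nonneg (by positivity)] at this
  have hchain : ∑ i ∈ Finset.range n, dist (γ (i * τ)) (γ ((i + 1 : ℕ) * τ)) ∈
      chainLengths ε (γ 0) (γ L) :=
    ⟨n, fun i => γ (i * τ), by simp, by simp [τ, mul_div_cancel₀ L hn_pos.ne'],
      fun i hi => (hstep i hi).trans hτε, rfl⟩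
  calc chainDist ε (γ 0) (γ L)
      ≤ ∑ i ∈ Finset.range n, dist (γ (i * τ)) (γ ((i + 1 : ℕ) * τ)) := chainDist_le hchain
    _ ≤ ∑ _i ∈ Finset.range n, τ :=
        Finset.sum_le_sum fun i hi => hstep i (Finset.mem_range.1 hi)
    _ = L := by
        rw [Finset.sum_const, Finset.card_range, nsmul_eq_mul, mul_div_cancel₀ L hn_pos.ne']

variable [ConnectedSpace X]

theorem dist_le_chainDist (hε : 0 < ε) (x y : X) : dist x y ≤ chainDist ε x y :=
  le_csInf (chainLengths_nonempty hε x y) fun _ => dist_le_of_mem_chainLengths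

theorem chainDist_self (hε : 0 < ε) (x : X) : chainDist ε x x = 0 :=
  (chainDist_le (zero_mem_chainLengths ε x)).antisymm (dist_self x ▸ dist_le_chainDist hε x x)

theorem chainDist_triangle (hε : 0 < ε) (x y z : X) :
    chainDist ε x z ≤ chainDist ε x y + chainDist ε y z := by
  refine le_of_forall_pos_lt_add fun η hη => ?_
  obtain ⟨s, hs, hs_lt⟩ := Real.lt_sInf_add_pos (chainLengths_nonempty hε x y) (half_pos hη)
  obtain ⟨t, ht, ht_lt⟩ := Real.lt_sInf_add_pos (chainLengths_nonempty hε y z) (half_pos hη)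
  calc chainDist ε x z ≤ s + t := chainDist_le (add_mem_chainLengths hs ht)
    _ < chainDist ε x y + chainDist ε y z + η := by unfold chainDist; linarith

theorem abs_chainDist_sub_chainDist_le (hε : 0 < ε) (x : X) (h : dist y z ≤ ε) :
    |chainDist ε x y - chainDist ε x z| ≤ dist y z :=
  abs_sub_le_iff.2
    ⟨by linarith [chainDist_triangle hε x z y, chainDist_le_dist (dist_comm y z ▸ h),
        dist_comm y z],
      by linarith [chainDist_triangle hε x y z, chainDist_le_dist h]⟩

theorem continuous_chainDist (hε : 0 < ε) (x : X) : Continuous (chainDist ε x) := by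
  refine LocallyLipschitz.continuous fun z => ⟨1, ball z (ε / 2), ball_mem_nhds z (half_pos hε),
    LipschitzOnWith.of_dist_le_mul fun a ha b hb => ?_⟩
  have hab : dist a b ≤ ε := by linarith [dist_triangle_right a b z, mem_ball.1 ha, mem_ball.1 hb]
  simpa [Real.dist_eq] using abs_chainDist_sub_chainDist_le hε x hab

theorem isUpperGradient_one_chainDist (hε : 0 < ε) (x : X) :
    IsUpperGradient (fun _ => 1) (chainDist ε x) := by
  intro L γ hL hγ
  have hγ_rev : LipschitzOnWith 1 (fun t => γ (L - t)) (Icc 0 L) :=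
    LipschitzOnWith.of_dist_le_mul fun a ha b hb => by
      have := hγ.dist_le_mul (L - a) ⟨by linarith [ha.2], by linarith [ha.1]⟩ (L - b)
        ⟨by linarith [hb.2], by linarith [hb.1]⟩
      rwa [dist_sub_left] at this
  have h_fwd := chainDist_le_of_lipschitzOnWith hε hL hγ
  have h_bwd := chainDist_le_of_lipschitzOnWith hε hL hγ_rev
  simp only [sub_zero, sub_self] at h_bwd
  rw [setLIntegral_const, one_mul, Real.volume_Icc, sub_zero]
  refine ENNReal.ofReal_le_ofReal (abs_sub_le_iff.2 ⟨?_, ?_⟩)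
  · linarith [chainDist_triangle hε x (γ 0) (γ L)]
  · linarith [chainDist_triangle hε x (γ L) (γ 0)]

end Chain

section CoarsePath

theorem unitInterval.dist_le_one (a b : I) : dist a b ≤ 1 := by
  rw [Subtype.dist_eq, Real.dist_eq, abs_le]
  constructor <;> linarith [a.2.1, a.2.2, b.2.1, b.2.2]

variable {X : Type*} [MetricSpace X] {L δ : ℝ} {x y : X}

def IsCoarseLipschitzPath (L δ : ℝ) (x y : X) (F : I → X) : Prop :=
  F 0 = x ∧ F 1 = y ∧ ∀ a b, dist (F a) (F b) ≤ L * dist a b + δ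

theorem IsCoarseLipschitzPath.mono {L' δ' : ℝ} {F : I → X}
    (hF : IsCoarseLipschitzPath L δ x y F) (hL : L ≤ L') (hδ : δ ≤ δ') :
    IsCoarseLipschitzPath L' δ' x y F :=
  ⟨hF.1, hF.2.1, fun a b => (hF.2.2 a b).trans (by gcongr)⟩

theorem IsCoarseLipschitzPath.dist_le {F : I → X} (hF : IsCoarseLipschitzPath L δ x y F)
    (hL : 0 ≤ L) (t : I) : dist x (F t) ≤ L + δ := by
  calc dist x (F t) = dist (F 0) (F t) := by rw [hF.1]
    _ ≤ L * 1 + δ := (hF.2.2 0 t).trans (by gcongr; exact unitInterval.dist_le_one 0 t)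
    _ = L + δ := by rw [mul_one]

theorem isClosed_setOf_isCoarseLipschitzPath (L δ : ℝ) (x y : X) :
    IsClosed {F : I → X | IsCoarseLipschitzPath L δ x y F} := by
  simp only [IsCoarseLipschitzPath, ofPred_and, ofPred_forall]
  refine (isClosed_eq (continuous_apply 0) continuous_const).inter
    ((isClosed_eq (continuous_apply 1) continuous_const).inter
      (isClosed_iInter fun a => isClosed_iInter fun b => isClosed_le ?_ continuous_const))
  exact (continuous_apply a).dist (continuous_apply b)

/-- Tychonoff compactness of `I → closedBall x (L + 1)`: a cluster point of coarse paths with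
defect tending to `0` is a genuine `L`-Lipschitz path. -/
theorem exists_lipschitzWith_of_forall_isCoarseLipschitzPath [ProperSpace X] (hL : 0 ≤ L)
    (h : ∀ δ > 0, ∃ F, IsCoarseLipschitzPath L δ x y F) :
    ∃ φ : I → X, LipschitzWith (Real.toNNReal L) φ ∧ φ 0 = x ∧ φ 1 = y := by
  choose F hF using fun n : ℕ => h (1 / (n + 1)) Nat.one_div_pos_of_nat
  have hF_mem : ∀ n, F n ∈ univ.pi fun _ => closedBall x (L + 1) := fun n =>
    mem_univ_pi.2 fun t => mem_closedBall'.2 <| (hF n).dist_le hL t |>.trans <| by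
      gcongr; exact Nat.one_div_le_one_div (Nat.zero_le n) |>.trans_eq (by simp)
  obtain ⟨φ, -, hφ⟩ :=
    (isCompact_univ_pi fun _ => isCompact_closedBall x (L + 1)).exists_mapClusterPt
      (f := atTop) (tendsto_principal.2 (Eventually.of_forall hF_mem))
  have hφ_coarse : ∀ δ > 0, IsCoarseLipschitzPath L δ x y φ := fun δ hδ =>
    (isClosed_setOf_isCoarseLipschitzPath L δ x y).mem_of_mapClusterPt hφ <| by
      filter_upwards [tendsto_one_div_add_atTop_nhds_zero_nat.eventually (eventually_le_nhds hδ)]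
        with n hn using (hF n).mono le_rfl hn
  refine ⟨φ, LipschitzWith.of_dist_le_mul fun a b => ?_, (hφ_coarse 1 one_pos).1,
    (hφ_coarse 1 one_pos).2.1⟩
  rw [Real.coe_toNNReal L hL]
  exact le_of_forall_pos_le_add fun δ hδ => (hφ_coarse δ hδ).2.2 a b

end CoarsePath

section StepPath
variable {X : Type*} [MetricSpace X] {ε s : ℝ} {x y : X}

open Classical in
/-- At time `t` the path sits at the last chain point whose arclength along the chain is at
most `s * t`. -/
theorem exists_isCoarseLipschitzPath_of_mem_chainLengths (hε : 0 ≤ ε)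
    (hs : s ∈ chainLengths ε x y) :
    ∃ F, IsCoarseLipschitzPath s ε x y F := by
  have hs0 : 0 ≤ s := dist_nonneg.trans (dist_le_of_mem_chainLengths hs)
  obtain ⟨n, f, rfl, rfl, hf, hsum⟩ := hs
  set P : ℕ → ℝ := fun i => ∑ j ∈ Finset.range i, dist (f j) (f (j + 1))
  have hP_dist : ∀ {i j}, i ≤ j → dist (f i) (f j) ≤ P j - P i := fun hij =>
    (dist_le_Ico_sum_dist f hij).trans_eq (Finset.sum_Ico_eq_sub _ hij)
  set G : ℝ → ℕ := fun τ => Nat.findGreatest (fun i => P i ≤ τ) n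
  have hG_le : ∀ {τ}, 0 ≤ τ → P (G τ) ≤ τ := fun hτ =>
    Nat.findGreatest_spec (P := fun i => P i ≤ _) (Nat.zero_le n) (by simpa [P] using hτ)
  have hG_ge : ∀ {τ}, τ ≤ s → τ - ε ≤ P (G τ) := by
    intro τ hτ
    rcases (Nat.findGreatest_le n : G τ ≤ n).lt_or_eq with hlt | heq
    · have hnext : τ < P (G τ + 1) :=
        not_le.1 (Nat.findGreatest_is_greatest (P := fun i => P i ≤ τ) (Nat.lt_succ_self _) hlt)
      have : P (G τ + 1) = P (G τ) + dist (f (G τ)) (f (G τ + 1)) := Finset.sum_range_succ _ _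
      linarith [hf (G τ) hlt]
    · rw [show G τ = n from heq]; linarith [show P n = s from hsum]
  have hG_mono : Monotone G := fun _ _ hτ =>
    Nat.findGreatest_mono (fun _ hi => hi.trans hτ) le_rfl
  have hdist_of_le : ∀ a b : I, a ≤ b →
      dist (f (G (s * a))) (f (G (s * b))) ≤ s * dist a b + ε := by
    intro a b hab
    have hab' : (a : ℝ) ≤ b := hab
    rw [Subtype.dist_eq, Real.dist_eq, abs_sub_comm, abs_of_nonneg (sub_nonneg.2 hab')]
    have h_le := hG_le (mul_nonneg hs0 b.2.1)
    have h_ge := hG_ge (mul_le_of_le_one_right hs0 a.2.2)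
    linarith [hP_dist (hG_mono (mul_le_mul_of_nonneg_left hab' hs0))]
  refine ⟨fun t => f (G (s * t)), ?_, ?_, fun a b => ?_⟩
  · have h0 : dist (f 0) (f (G 0)) ≤ 0 :=
      (hP_dist (Nat.zero_le _)).trans (by simpa [P] using hG_le le_rfl)
    show f (G (s * (0 : I))) = f 0
    rw [Set.Icc.coe_zero, mul_zero]
    exact (dist_le_zero.1 h0).symm
  · show f (G (s * (1 : I))) = f n
    rw [Set.Icc.coe_one, mul_one]
    exact congrArg f (Nat.findGreatest_eq (P := fun i => P i ≤ s) hsum.le)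
  · rcases le_total a b with hab | hab
    · exact hdist_of_le a b hab
    · rw [dist_comm, dist_comm a]; exact hdist_of_le b a hab

end StepPath

section SetAverage

variable {Ω : Type*} [MeasurableSpace Ω] {μ : Measure Ω} {s s' : Set Ω} {u : Ω → ℝ}

theorem abs_setAverage_sub_le_setAverage_abs_sub (hs₀ : μ s ≠ 0) (hs : μ s ≠ ∞)
    (hu : IntegrableOn u s μ) (c : ℝ) :
    |(⨍ x in s, u x ∂μ) - c| ≤ ⨍ x in s, |u x - c| ∂μ := by
  have : IsProbabilityMeasure ((μ s)⁻¹ • μ.restrict s) :=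
    ProbabilityTheory.cond_isProbabilityMeasure_of_finite hs₀ hs
  rw [setAverage_eq', setAverage_eq']
  calc |(∫ x, u x ∂(μ s)⁻¹ • μ.restrict s) - c|
      = |∫ x, (u x - c) ∂(μ s)⁻¹ • μ.restrict s| := by
        rw [integral_sub (hu.smul_measure (ENNReal.inv_ne_top.2 hs₀)) (integrable_const c),
          integral_const, probReal_univ, one_smul]
    _ ≤ ∫ x, |u x - c| ∂(μ s)⁻¹ • μ.restrict s := abs_integral_le_integral_abs

theorem setAverage_le_of_forall_le (hs : MeasurableSet s) (hs₀ : μ s ≠ 0) (hs_top : μ s ≠ ∞)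
    (hu : IntegrableOn u s μ) {m : ℝ} (h : ∀ x ∈ s, u x ≤ m) : ⨍ x in s, u x ∂μ ≤ m := by
  rw [← setAverage_const hs₀ hs_top m, setAverage_eq, setAverage_eq]
  exact smul_le_smul_of_nonneg_left (setIntegral_mono_on hu (integrableOn_const hs_top) hs h)
    (inv_nonneg.2 measureReal_nonneg)

theorem abs_setAverage_sub_setAverage_le (hs' : s' ⊆ s) (hs'₀ : μ s' ≠ 0) (hs : μ s ≠ ∞)
    (hu : IntegrableOn u s μ) {K m : ℝ} (hK : 0 ≤ K) (hμ : μ s ≤ ENNReal.ofReal K * μ s')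
    (hosc : ⨍ x in s, |u x - ⨍ y in s, u y ∂μ| ∂μ ≤ m) :
    |(⨍ x in s', u x ∂μ) - ⨍ x in s, u x ∂μ| ≤ K * m := by
  set c := ⨍ x in s, u x ∂μ
  have hs'_top : μ s' ≠ ∞ := ne_top_of_le_ne_top hs (measure_mono hs')
  have hs'_pos : 0 < μ.real s' := ENNReal.toReal_pos hs'₀ hs'_top
  have habs : IntegrableOn (fun x => |u x - c|) s μ := (hu.sub (integrableOn_const hs)).abs
  have hμ_real : μ.real s ≤ K * μ.real s' := by
    simpa [measureReal_def, ENNReal.toReal_mul, ENNReal.toReal_ofReal hK] using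
      ENNReal.toReal_mono (ENNReal.mul_ne_top ENNReal.ofReal_ne_top hs'_top) hμ
  have havg_nonneg : 0 ≤ ⨍ x in s, |u x - c| ∂μ := by
    rw [setAverage_eq]
    exact smul_nonneg (inv_nonneg.2 measureReal_nonneg) (integral_nonneg fun _ => abs_nonneg _)
  refine le_of_mul_le_mul_left ?_ hs'_pos
  calc μ.real s' * |(⨍ x in s', u x ∂μ) - c|
      ≤ μ.real s' * ⨍ x in s', |u x - c| ∂μ := by
        gcongr
        exact abs_setAverage_sub_le_setAverage_abs_sub hs'₀ hs'_top (hu.mono_set hs') c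
    _ = ∫ x in s', |u x - c| ∂μ := measure_smul_setAverage _ hs'_top
    _ ≤ ∫ x in s, |u x - c| ∂μ :=
        setIntegral_mono_set habs (Eventually.of_forall fun _ => abs_nonneg _) hs'.eventuallyLE
    _ = μ.real s * ⨍ x in s, |u x - c| ∂μ := (measure_smul_setAverage _ hs).symm
    _ ≤ (K * μ.real s') * m := by gcongr
    _ = μ.real s' * (K * m) := by ring

end SetAverage

section Campanato

variable {X : Type*} [MetricSpace X] [MeasurableSpace X] [ProperSpace X]
  {μ : Measure X} {u : X → ℝ} {r₀ Cd C : ℝ}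

theorem MeasureTheory.LocallyIntegrable.integrableOn_ball (hu : LocallyIntegrable u μ) (x : X)
    (r : ℝ) : IntegrableOn u (ball x r) μ :=
  (hu.integrableOn_isCompact (isCompact_closedBall x r)).mono_set ball_subset_closedBall

variable [OpensMeasurableSpace X]
  (hμ : ∀ (x : X) (r : ℝ), 0 < r → 0 < μ (ball x r) ∧ μ (ball x r) < ⊤)
include hμ

theorem tendsto_setAverage_ball_of_continuousAt (hu_int : LocallyIntegrable u μ) {z : X}
    (hu : ContinuousAt u z) :
    Tendsto (fun r => ⨍ x in ball z r, u x ∂μ) (𝓝[>] 0) (𝓝 (u z)) := by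
  rw [Metric.tendsto_nhdsWithin_nhds]
  intro η hη
  obtain ⟨δ, hδ, hδu⟩ := Metric.continuousAt_iff.1 hu (η / 2) (half_pos hη)
  refine ⟨δ, hδ, fun r (hr : 0 < r) hrδ => ?_⟩
  rw [Real.dist_eq, sub_zero, abs_of_pos hr] at hrδ
  have hint := hu_int.integrableOn_ball z r
  rw [Real.dist_eq]
  calc |(⨍ x in ball z r, u x ∂μ) - u z| ≤ ⨍ x in ball z r, |u x - u z| ∂μ :=
        abs_setAverage_sub_le_setAverage_abs_sub (hμ z r hr).1.ne' (hμ z r hr).2.ne hint _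
    _ ≤ η / 2 :=
        setAverage_le_of_forall_le measurableSet_ball (hμ z r hr).1.ne' (hμ z r hr).2.ne
          (hint.sub (integrableOn_const (hμ z r hr).2.ne)).abs
          fun x hx => (hδu ((mem_ball.1 hx).trans hrδ)).le
    _ < η := half_lt_self hη

variable (hdbl : ∀ (x : X) (r : ℝ), 0 < r → r < r₀ →
    μ (ball x (2 * r)) ≤ ENNReal.ofReal Cd * μ (ball x r))
  (hosc : ∀ (x : X) (r : ℝ), 0 < r → r < r₀ →
    ⨍ y in ball x r, |u y - ⨍ z in ball x r, u z ∂μ| ∂μ ≤ C * r)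
include hdbl hosc

/-- Telescoping over the dyadic balls `B(z, d / 2 ^ n)`, whose averages tend to `u z`. -/
theorem abs_sub_setAverage_ball_le (hCd : 0 ≤ Cd) (hu : Continuous u)
    (hu_int : LocallyIntegrable u μ) {z : X} {d : ℝ} (hd : 0 < d) (hdr : d < r₀) :
    |u z - ⨍ x in ball z d, u x ∂μ| ≤ 2 * Cd * C * d := by
  set a : ℕ → ℝ := fun n => ⨍ x in ball z (d / 2 ^ n), u x ∂μ
  have hrad : ∀ n : ℕ, 0 < d / 2 ^ n := fun n => by positivity
  have hrad_lt : ∀ n : ℕ, d / 2 ^ n < r₀ := fun n =>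
    (div_le_self hd.le (one_le_pow₀ one_le_two)).trans_lt hdr
  have hrad_succ : ∀ n : ℕ, 2 * (d / 2 ^ (n + 1)) = d / 2 ^ n := fun n => by
    rw [pow_succ]; field_simp
  have htend : Tendsto a atTop (𝓝 (u z)) :=
    (tendsto_setAverage_ball_of_continuousAt hμ hu_int hu.continuousAt).comp <|
      tendsto_nhdsWithin_iff.2 ⟨tendsto_const_nhds.div_atTop
        (tendsto_pow_atTop_atTop_of_one_lt one_lt_two), Eventually.of_forall hrad⟩
  have hstep : ∀ n, dist (a n) (a (n + 1)) ≤ 2 * Cd * C * d / 2 / 2 ^ n := fun n => by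
    rw [dist_comm, Real.dist_eq]
    calc |a (n + 1) - a n| ≤ Cd * (C * (d / 2 ^ n)) :=
          abs_setAverage_sub_setAverage_le
            (ball_subset_ball (by linarith [hrad_succ n, hrad (n + 1)])) (hμ z _ (hrad _)).1.ne'
            (hμ z _ (hrad n)).2.ne (hu_int.integrableOn_ball z _) hCd
            (hrad_succ n ▸ hdbl z _ (hrad _) (by linarith [hrad_succ n, hrad (n + 1), hrad_lt n]))
            (hosc z _ (hrad n) (hrad_lt n))
      _ = 2 * Cd * C * d / 2 / 2 ^ n := by ring
  simpa [a, dist_comm, Real.dist_eq] using dist_le_of_le_geometric_two_of_tendsto₀ hstep htend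

theorem abs_sub_le_mul_dist_of_setAverage_abs_sub_le (hCd : 1 ≤ Cd) (hC : 0 ≤ C)
    (hu : Continuous u) (hu_int : LocallyIntegrable u μ) {x y : X} (hxy : 2 * dist x y < r₀) :
    |u x - u y| ≤ 8 * Cd ^ 2 * C * dist x y := by
  rcases (dist_nonneg (x := x) (y := y)).eq_or_lt with hd | hd
  · rw [← hd, dist_eq_zero.1 hd.symm, sub_self, abs_zero, mul_zero]
  set d := dist x y
  have hd_lt : d < r₀ := by linarith
  -- compare `u x`, `u_B(x,d)`, `u_B(x,2d)`, `u_B(y,d)`, `u y`, using `B(y,d) ⊆ B(x,2d) ⊆ B(y,4d)`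
  have hx := abs_sub_setAverage_ball_le hμ hdbl hosc (by linarith) hu hu_int (z := x) hd hd_lt
  have hy := abs_sub_setAverage_ball_le hμ hdbl hosc (by linarith) hu hu_int (z := y) hd hd_lt
  have hμ_xy : μ (ball x (2 * d)) ≤ ENNReal.ofReal (Cd ^ 2) * μ (ball y d) :=
    calc μ (ball x (2 * d)) ≤ μ (ball y (2 * (2 * d))) :=
          measure_mono (ball_subset_ball' (by linarith [dist_comm x y]))
      _ ≤ ENNReal.ofReal Cd * μ (ball y (2 * d)) := hdbl y _ (by positivity) hxy
      _ ≤ ENNReal.ofReal Cd * (ENNReal.ofReal Cd * μ (ball y d)) := by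
          gcongr; exact hdbl y d hd hd_lt
      _ = ENNReal.ofReal (Cd ^ 2) * μ (ball y d) := by
          rw [← mul_assoc, ← ENNReal.ofReal_mul (by linarith), sq]
  have hxx := abs_setAverage_sub_setAverage_le (ball_subset_ball (by linarith))
    (hμ x d hd).1.ne' (hμ x (2 * d) (by positivity)).2.ne (hu_int.integrableOn_ball x _)
    (by linarith) (hdbl x d hd hd_lt) (hosc x (2 * d) (by positivity) hxy)
  have hyx := abs_setAverage_sub_setAverage_le (ball_subset_ball' (by linarith [dist_comm x y]))
    (hμ y d hd).1.ne' (hμ x (2 * d) (by positivity)).2.ne (hu_int.integrableOn_ball x _)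
    (by positivity) hμ_xy (hosc x (2 * d) (by positivity) hxy)
  have hCd_sq : Cd * (C * d) ≤ Cd ^ 2 * (C * d) := by
    gcongr; nlinarith
  rw [abs_le] at hx hy hxx hyx ⊢
  constructor <;> nlinarith

end Campanato

section Curve

variable {X : Type*} [MetricSpace X] [ProperSpace X] [ConnectedSpace X]

theorem exists_lipschitzOnWith_of_chainDist_le {x y : X} {L : ℝ}
    (h : ∀ ε > 0, chainDist ε x y ≤ L) :
    ∃ γ : ℝ → X, LipschitzOnWith (Real.toNNReal L) γ (Icc 0 1) ∧ γ 0 = x ∧ γ 1 = y := by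
  have hL : 0 ≤ L := dist_nonneg.trans ((dist_le_chainDist one_pos x y).trans (h 1 one_pos))
  obtain ⟨φ, hφ, hφ0, hφ1⟩ := exists_lipschitzWith_of_forall_isCoarseLipschitzPath hL fun δ hδ => by
    obtain ⟨s, hs, hs_lt⟩ :=
      Real.lt_sInf_add_pos (chainLengths_nonempty (half_pos hδ) x y) (half_pos hδ)
    have hsL : s ≤ L + δ / 2 := by
      linarith [h (δ / 2) (half_pos hδ), show chainDist (δ / 2) x y = sInf _ from rfl]
    obtain ⟨F, hF0, hF1, hF⟩ :=
      exists_isCoarseLipschitzPath_of_mem_chainLengths (half_pos hδ).le hs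
    refine ⟨F, hF0, hF1, fun a b => ?_⟩
    calc dist (F a) (F b) ≤ s * dist a b + δ / 2 := hF a b
      _ ≤ (L + δ / 2) * dist a b + δ / 2 := by gcongr
      _ ≤ L * dist a b + δ := by
          nlinarith [unitInterval.dist_le_one a b, dist_nonneg (x := a) (y := b)]
  refine ⟨φ ∘ projIcc 0 1 zero_le_one,
    (mul_one (Real.toNNReal L) ▸ hφ.comp (LipschitzWith.projIcc zero_le_one)).lipschitzOnWith,
    ?_, ?_⟩
  · rw [Function.comp_apply, projIcc_left]; exact hφ0
  · rw [Function.comp_apply, projIcc_right]; exact hφ1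

end Curve

theorem UniformlyLocallyControlledGeometry.exists_doubling_and_oscillation_le {X : Type*}
    [MetricSpace X] [MeasurableSpace X] {p : ℝ} {μ : Measure X}
    (hμ : ∀ (x : X) (r : ℝ), 0 < r → 0 < μ (ball x r) ∧ μ (ball x r) < ⊤)
    (hgeom : UniformlyLocallyControlledGeometry p μ) :
    ∃ r₀ Cd C : ℝ, 0 < r₀ ∧ 1 ≤ Cd ∧ 0 < C ∧
      (∀ (x : X) (r : ℝ), 0 < r → r < r₀ →
        μ (ball x (2 * r)) ≤ ENNReal.ofReal Cd * μ (ball x r)) ∧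
      ∀ u : X → ℝ, LocallyIntegrable u μ → IsUpperGradient (fun _ => 1) u →
        ∀ (x : X) (r : ℝ), 0 < r → r < r₀ →
          ⨍ y in ball x r, |u y - ⨍ z in ball x r, u z ∂μ| ∂μ ≤ C * r := by
  obtain ⟨R₀, Cd, C, lam, hR₀, hCd, hC, hlam, hdbl, hPI⟩ := hgeom
  obtain ⟨r₀, -, hr₀_pos, hr₀⟩ := ENNReal.lt_iff_exists_real_btwn.1 hR₀
  have hscale : ∀ r : ℝ, r < r₀ → ENNReal.ofReal r < R₀ := fun r hr =>
    (ENNReal.ofReal_le_ofReal hr.le).trans_lt hr₀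
  refine ⟨r₀, Cd, C, ENNReal.ofReal_pos.1 hr₀_pos, hCd, hC,
    fun x r hr hrr => hdbl x r hr (hscale r hrr), fun u hu_int hu x r hr hrr => ?_⟩
  have hB := hμ x (lam * r) (by positivity)
  have h := hPI u _ hu_int measurable_const hu x r hr (hscale r hrr)
  rw [ENNReal.one_rpow, setLIntegral_one, ENNReal.div_self hB.1.ne' hB.2.ne, ENNReal.one_rpow,
    mul_one] at h
  exact (ENNReal.ofReal_le_ofReal_iff (by positivity)).1 h

theorem statement13_general {X : Type*} [MetricSpace X] [MeasurableSpace X] [BorelSpace X]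
    [ProperSpace X] [ConnectedSpace X]
    (μ : Measure X)
    (hball : ∀ (x : X) (r : ℝ), 0 < r → 0 < μ (ball x r) ∧ μ (ball x r) < ⊤)
    (p : ℝ)
    (hgeom : UniformlyLocallyControlledGeometry p μ) :
    ∃ (R : ℝ≥0∞) (C : ℝ), 0 < R ∧ 1 ≤ C ∧
      ∀ x y : X, ENNReal.ofReal (dist x y) ≤ R →
        ∃ γ : ℝ → X, LipschitzOnWith (Real.toNNReal (C * dist x y)) γ (Set.Icc 0 1) ∧
          γ 0 = x ∧ γ 1 = y := by
  obtain ⟨r₀, Cd, C, hr₀, hCd, hC, hdbl, hosc⟩ := hgeom.exists_doubling_and_oscillation_le hball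
  have : IsLocallyFiniteMeasure μ :=
    ⟨fun z => ⟨ball z 1, ball_mem_nhds z one_pos, (hball z 1 one_pos).2⟩⟩
  have hchain : ∀ ε > 0, ∀ x y : X, 2 * dist x y < r₀ →
      chainDist ε x y ≤ 8 * Cd ^ 2 * C * dist x y := fun ε hε x y hxy => by
    have hu := continuous_chainDist hε x
    have := abs_sub_le_mul_dist_of_setAverage_abs_sub_le hball hdbl
      (hosc _ hu.locallyIntegrable (isUpperGradient_one_chainDist hε x)) hCd hC.le hu
      hu.locallyIntegrable hxy
    rwa [chainDist_self hε, zero_sub, abs_neg, abs_of_nonneg (dist_nonneg.trans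
      (dist_le_chainDist hε x y))] at this
  refine ⟨ENNReal.ofReal (r₀ / 4), max 1 (8 * Cd ^ 2 * C), ENNReal.ofReal_pos.2 (by positivity),
    le_max_left _ _, fun x y hxy => ?_⟩
  have hxy' : 2 * dist x y < r₀ := by
    linarith [(ENNReal.ofReal_le_ofReal_iff (by positivity)).1 hxy]
  obtain ⟨γ, hγ, hγ0, hγ1⟩ :=
    exists_lipschitzOnWith_of_chainDist_le fun ε hε => hchain ε hε x y hxy'
  exact ⟨γ, hγ.weaken (Real.toNNReal_le_toNNReal (by gcongr; exact le_max_right _ _)), hγ0, hγ1⟩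

/-- under the standing assumptions, a space of uniformly locally `p`-controlled
geometry is uniformly locally quasiconvex: there are `R ∈ (0,∞]` and `C ≥ 1` such that any
two points at distance at most `R` are joined by a `(C·d(x,y))`-Lipschitz curve
`γ : [0,1] → X`. -/
theorem statement13 {X : Type*} [MetricSpace X] [MeasurableSpace X] [BorelSpace X]
    [ProperSpace X] [ConnectedSpace X]
    (μ : Measure X) (hXinf : μ Set.univ = ⊤)
    (hball : ∀ (x : X) (r : ℝ), 0 < r → 0 < μ (ball x r) ∧ μ (ball x r) < ⊤)
    (p : ℝ) (hp : 1 ≤ p)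
    (hgeom : UniformlyLocallyControlledGeometry p μ) :
    ∃ (R : ℝ≥0∞) (C : ℝ), 0 < R ∧ 1 ≤ C ∧
      ∀ x y : X, ENNReal.ofReal (dist x y) ≤ R →
        ∃ γ : ℝ → X, LipschitzOnWith (Real.toNNReal (C * dist x y)) γ (Set.Icc 0 1) ∧
          γ 0 = x ∧ γ 1 = y :=
  statement13_general μ hball p hgeom
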